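/- Let λ > 0, let p ∈ [4,∞), and let (a_m)_{m ∈ S_λ} be complex numbers, where S_λ := {m ∈ ℤ² : |m|² = λ}. Set u(x) := Σ_{m ∈ S_λ} a_m e^{2πi m·x}. Then ∫_{[0,1]²} |u(x)|^p dx ≤ 3·|S_λ|^{(p−4)/2}·( Σ_{m ∈ S_λ} |a_m|² )^{p/2}, where |S_λ| denotes the cardinality of S_λ. -/

import Mathlib

/-!
Writing `u = Σ_{m ∈ S} a_m e_m`, Parseval applied to `u² = Σ_s b_s e_s` with
`b_s = Σ_{m + n = s} a_m a_n` gives `∫ |u|⁴ = Σ_s |b_s|²`. For `s ≠ 0` a representation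
`s = m + n` with `m, n ∈ S_λ` puts `m` on the two distinct circles of radius `√λ` about `0` and
about `s`, which meet in at most two points; so `b_s` has at most two terms and Cauchy–Schwarz
gives `Σ_{s ≠ 0} |b_s|² ≤ 2 (Σ |a_m|²)²`, while AM–GM gives `|b_0| ≤ Σ |a_m|²`. This is the
`L⁴` bound with constant `3`; the `Lᵖ` bound follows from `|u| ≤ (|S_λ| Σ |a_m|²)^{1/2}`.
-/

open MeasureTheory Real Finset
open scoped ComplexConjugate Pointwise

noncomputable section

namespace LpCircle

def fourierZ2 (m : ℤ × ℤ) (x : ℝ × ℝ) : ℂ :=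
  Complex.exp (2 * (π : ℂ) * Complex.I * ((m.1 : ℂ) * (x.1 : ℂ) + (m.2 : ℂ) * (x.2 : ℂ)))

def unitSquare : Set (ℝ × ℝ) := Set.Icc 0 1 ×ˢ Set.Icc 0 1

lemma integrableOn_unitSquare {E : Type*} [NormedAddCommGroup E] {f : ℝ × ℝ → E}
    (hf : Continuous f) : IntegrableOn f unitSquare :=
  hf.continuousOn.integrableOn_compact (isCompact_Icc.prod isCompact_Icc)

@[fun_prop]
lemma continuous_fourierZ2 (m : ℤ × ℤ) : Continuous (fourierZ2 m) := by
  unfold fourierZ2; fun_prop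

lemma norm_fourierZ2 (m : ℤ × ℤ) (x : ℝ × ℝ) : ‖fourierZ2 m x‖ = 1 := by
  rw [fourierZ2, Complex.norm_exp]
  simp

lemma fourierZ2_add (m n : ℤ × ℤ) (x : ℝ × ℝ) :
    fourierZ2 (m + n) x = fourierZ2 m x * fourierZ2 n x := by
  simp only [fourierZ2, ← Complex.exp_add, Prod.fst_add, Prod.snd_add]
  push_cast; ring_nf

lemma conj_fourierZ2 (m : ℤ × ℤ) (x : ℝ × ℝ) : conj (fourierZ2 m x) = fourierZ2 (-m) x := by
  simp only [fourierZ2, ← Complex.exp_conj, map_mul, map_add, Complex.conj_I, map_ofNat,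
    Complex.conj_ofReal, map_intCast, Prod.fst_neg, Prod.snd_neg]
  push_cast; ring_nf

lemma integral_exp_two_pi_I_int_mul (k : ℤ) :
    ∫ t in Set.Icc (0 : ℝ) 1, Complex.exp (2 * π * Complex.I * k * t) =
      if k = 0 then 1 else 0 := by
  rw [integral_Icc_eq_integral_Ioc, ← intervalIntegral.integral_of_le zero_le_one]
  split_ifs with hk
  · simp [hk]
  have hc : 2 * π * Complex.I * k ≠ 0 := by simp [pi_ne_zero, hk]
  rw [integral_exp_mul_complex hc, Complex.ofReal_one, mul_one, Complex.ofReal_zero, mul_zero,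
    mul_comm, Complex.exp_int_mul_two_pi_mul_I, Complex.exp_zero, sub_self, zero_div]

lemma integral_fourierZ2 (m : ℤ × ℤ) :
    ∫ x in unitSquare, fourierZ2 m x = if m = 0 then 1 else 0 := by
  have hsplit : ∀ x : ℝ × ℝ, fourierZ2 m x = Complex.exp (2 * π * Complex.I * m.1 * x.1) *
      Complex.exp (2 * π * Complex.I * m.2 * x.2) := by
    intro x; rw [fourierZ2, ← Complex.exp_add]; ring_nf
  simp only [hsplit]
  rw [unitSquare, Measure.volume_eq_prod,
    setIntegral_prod_mul (fun t : ℝ => Complex.exp (2 * π * Complex.I * m.1 * t))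
      (fun t : ℝ => Complex.exp (2 * π * Complex.I * m.2 * t)),
    integral_exp_two_pi_I_int_mul, integral_exp_two_pi_I_int_mul]
  by_cases h1 : m.1 = 0 <;> by_cases h2 : m.2 = 0 <;> simp [h1, h2, Prod.ext_iff]

def trigPoly (S : Finset (ℤ × ℤ)) (a : ℤ × ℤ → ℂ) (x : ℝ × ℝ) : ℂ :=
  ∑ m ∈ S, a m * fourierZ2 m x

@[fun_prop]
lemma continuous_trigPoly (S : Finset (ℤ × ℤ)) (a : ℤ × ℤ → ℂ) : Continuous (trigPoly S a) := by
  unfold trigPoly; fun_prop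

lemma norm_trigPoly_le (S : Finset (ℤ × ℤ)) (a : ℤ × ℤ → ℂ) (x : ℝ × ℝ) :
    ‖trigPoly S a x‖ ≤ √(#S * ∑ m ∈ S, ‖a m‖ ^ 2) := by
  refine Real.le_sqrt_of_sq_le ?_
  calc ‖trigPoly S a x‖ ^ 2 ≤ (∑ m ∈ S, ‖a m‖) ^ 2 := by
        gcongr
        refine (norm_sum_le _ _).trans_eq (sum_congr rfl fun m _ => ?_)
        rw [norm_mul, norm_fourierZ2, mul_one]
    _ ≤ #S * ∑ m ∈ S, ‖a m‖ ^ 2 := sq_sum_le_card_mul_sum_sq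

lemma integral_norm_sq_trigPoly (T : Finset (ℤ × ℤ)) (b : ℤ × ℤ → ℂ) :
    ∫ x in unitSquare, ‖trigPoly T b x‖ ^ 2 = ∑ s ∈ T, ‖b s‖ ^ 2 := by
  have hexpand : ∀ x, ((‖trigPoly T b x‖ ^ 2 : ℝ) : ℂ)
      = ∑ s ∈ T, ∑ t ∈ T, b s * conj (b t) * fourierZ2 (s - t) x := by
    intro x
    rw [Complex.ofReal_pow, ← Complex.mul_conj', trigPoly, map_sum, sum_mul_sum]
    refine sum_congr rfl fun s _ => sum_congr rfl fun t _ => ?_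
    rw [map_mul, conj_fourierZ2, sub_eq_add_neg, fourierZ2_add]; ring
  have hint : ∀ s t, IntegrableOn (fun x => b s * conj (b t) * fourierZ2 (s - t) x) unitSquare :=
    fun s t => integrableOn_unitSquare (by fun_prop)
  apply Complex.ofReal_injective
  rw [← integral_complex_ofReal, Complex.ofReal_sum]
  simp only [hexpand, Complex.ofReal_pow]
  rw [integral_finsetSum _ fun s _ => integrable_finsetSum _ fun t _ => hint s t]
  refine sum_congr rfl fun s hs => ?_
  simp only [integral_finsetSum _ fun t _ => hint s t, integral_const_mul, integral_fourierZ2,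
    sub_eq_zero, mul_ite, mul_one, mul_zero, sum_ite_eq, if_pos hs, Complex.mul_conj']

def sumPairs (S : Finset (ℤ × ℤ)) (s : ℤ × ℤ) : Finset ((ℤ × ℤ) × (ℤ × ℤ)) :=
  (S ×ˢ S).filter fun p => p.1 + p.2 = s

def autoconv (S : Finset (ℤ × ℤ)) (a : ℤ × ℤ → ℂ) (s : ℤ × ℤ) : ℂ :=
  ∑ p ∈ sumPairs S s, a p.1 * a p.2

lemma sum_sum_sumPairs {S T : Finset (ℤ × ℤ)} (hT : ∀ m ∈ S, ∀ n ∈ S, m + n ∈ T)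
    {M : Type*} [AddCommMonoid M] (f : (ℤ × ℤ) × (ℤ × ℤ) → M) :
    ∑ s ∈ T, ∑ p ∈ sumPairs S s, f p = ∑ p ∈ S ×ˢ S, f p :=
  sum_fiberwise_of_maps_to (fun _ hp => hT _ (mem_product.1 hp).1 _ (mem_product.1 hp).2) f

lemma trigPoly_sq {S T : Finset (ℤ × ℤ)} (hT : ∀ m ∈ S, ∀ n ∈ S, m + n ∈ T)
    (a : ℤ × ℤ → ℂ) (x : ℝ × ℝ) : trigPoly S a x ^ 2 = trigPoly T (autoconv S a) x := by
  simp only [trigPoly, autoconv, sum_mul]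
  rw [sq, sum_mul_sum, ← sum_product', ← sum_sum_sumPairs hT]
  refine sum_congr rfl fun s _ => sum_congr rfl fun p hp => ?_
  rw [← (mem_filter.1 hp).2, fourierZ2_add]; ring

lemma integral_norm_pow_four_trigPoly {S T : Finset (ℤ × ℤ)}
    (hT : ∀ m ∈ S, ∀ n ∈ S, m + n ∈ T) (a : ℤ × ℤ → ℂ) :
    ∫ x in unitSquare, ‖trigPoly S a x‖ ^ 4 = ∑ s ∈ T, ‖autoconv S a s‖ ^ 2 := by
  simp only [show ∀ x, ‖trigPoly S a x‖ ^ 4 = ‖trigPoly T (autoconv S a) x‖ ^ 2 from fun x => by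
    rw [← trigPoly_sq hT, norm_pow]; ring]
  exact integral_norm_sq_trigPoly T _

lemma sum_comp_le_sum_of_injOn {ι κ : Type*} {F : Finset ι} {S : Finset κ} {g : ι → κ}
    {f : κ → ℝ} (hf : ∀ m ∈ S, 0 ≤ f m) (hg : Set.InjOn g F) (hgS : ∀ i ∈ F, g i ∈ S) :
    ∑ i ∈ F, f (g i) ≤ ∑ m ∈ S, f m := by
  classical
  rw [← sum_image hg]
  exact sum_le_sum_of_subset_of_nonneg (image_subset_iff.2 hgS) fun m hm _ => hf m hm

lemma norm_autoconv_zero_le (S : Finset (ℤ × ℤ)) (a : ℤ × ℤ → ℂ) :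
    ‖autoconv S a 0‖ ≤ ∑ m ∈ S, ‖a m‖ ^ 2 := by
  have hmem : ∀ p ∈ sumPairs S 0, p.1 ∈ S ∧ p.2 ∈ S ∧ p.2 = -p.1 := fun p hp => by
    obtain ⟨hpS, hp0⟩ := mem_filter.1 hp
    exact ⟨(mem_product.1 hpS).1, (mem_product.1 hpS).2, eq_neg_of_add_eq_zero_right hp0⟩
  have hfst : ∑ p ∈ sumPairs S 0, ‖a p.1‖ ^ 2 ≤ ∑ m ∈ S, ‖a m‖ ^ 2 :=
    sum_comp_le_sum_of_injOn (f := fun m => ‖a m‖ ^ 2) (fun _ _ => sq_nonneg _)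
      (fun p hp q hq h => Prod.ext h (by rw [(hmem p hp).2.2, (hmem q hq).2.2, h]))
      fun p hp => (hmem p hp).1
  have hsnd : ∑ p ∈ sumPairs S 0, ‖a p.2‖ ^ 2 ≤ ∑ m ∈ S, ‖a m‖ ^ 2 :=
    sum_comp_le_sum_of_injOn (f := fun m => ‖a m‖ ^ 2) (fun _ _ => sq_nonneg _)
      (fun p hp q hq h => Prod.ext
        (neg_injective (by rw [← (hmem p hp).2.2, ← (hmem q hq).2.2, h])) h)
      fun p hp => (hmem p hp).2.1
  calc ‖autoconv S a 0‖ ≤ ∑ p ∈ sumPairs S 0, ‖a p.1‖ * ‖a p.2‖ :=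
        (norm_sum_le _ _).trans_eq (sum_congr rfl fun p _ => norm_mul _ _)
    _ ≤ ∑ p ∈ sumPairs S 0, (‖a p.1‖ ^ 2 + ‖a p.2‖ ^ 2) / 2 :=
        sum_le_sum fun p _ => by nlinarith [sq_nonneg (‖a p.1‖ - ‖a p.2‖)]
    _ ≤ ∑ m ∈ S, ‖a m‖ ^ 2 := by
        rw [← sum_div, sum_add_distrib]; linarith

lemma norm_autoconv_sq_le {S : Finset (ℤ × ℤ)} {s : ℤ × ℤ} (hs : #(sumPairs S s) ≤ 2)
    (a : ℤ × ℤ → ℂ) :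
    ‖autoconv S a s‖ ^ 2 ≤ 2 * ∑ p ∈ sumPairs S s, ‖a p.1‖ ^ 2 * ‖a p.2‖ ^ 2 := by
  calc ‖autoconv S a s‖ ^ 2 ≤ (∑ p ∈ sumPairs S s, ‖a p.1 * a p.2‖) ^ 2 := by
        gcongr; exact norm_sum_le _ _
    _ ≤ #(sumPairs S s) * ∑ p ∈ sumPairs S s, ‖a p.1 * a p.2‖ ^ 2 := sq_sum_le_card_mul_sum_sq
    _ ≤ 2 * ∑ p ∈ sumPairs S s, ‖a p.1‖ ^ 2 * ‖a p.2‖ ^ 2 := by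
        simp only [norm_mul, mul_pow]
        gcongr
        exact_mod_cast hs

theorem integral_norm_pow_four_trigPoly_le {S : Finset (ℤ × ℤ)}
    (hS : ∀ s ≠ 0, #(sumPairs S s) ≤ 2) (a : ℤ × ℤ → ℂ) :
    ∫ x in unitSquare, ‖trigPoly S a x‖ ^ 4 ≤ 3 * (∑ m ∈ S, ‖a m‖ ^ 2) ^ 2 := by
  set T := insert 0 (S + S)
  have hT : ∀ m ∈ S, ∀ n ∈ S, m + n ∈ T := fun m hm n hn => mem_insert_of_mem (add_mem_add hm hn)
  have hoff : ∑ s ∈ T.erase 0, ‖autoconv S a s‖ ^ 2 ≤ 2 * (∑ m ∈ S, ‖a m‖ ^ 2) ^ 2 :=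
    calc ∑ s ∈ T.erase 0, ‖autoconv S a s‖ ^ 2
        ≤ ∑ s ∈ T.erase 0, 2 * ∑ p ∈ sumPairs S s, ‖a p.1‖ ^ 2 * ‖a p.2‖ ^ 2 :=
          sum_le_sum fun s hs => norm_autoconv_sq_le (hS s (ne_of_mem_erase hs)) a
      _ ≤ ∑ s ∈ T, 2 * ∑ p ∈ sumPairs S s, ‖a p.1‖ ^ 2 * ‖a p.2‖ ^ 2 :=
          sum_le_sum_of_subset_of_nonneg (erase_subset _ _) fun _ _ _ => by positivity
      _ = 2 * (∑ m ∈ S, ‖a m‖ ^ 2) ^ 2 := by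
          rw [← mul_sum, sum_sum_sumPairs hT, sum_product, sq, sum_mul_sum]
  rw [integral_norm_pow_four_trigPoly hT, ← add_sum_erase T _ (mem_insert_self 0 _)]
  nlinarith [norm_autoconv_zero_le S a, norm_nonneg (autoconv S a 0)]

def toComplex (m : ℤ × ℤ) : ℂ := ⟨m.1, m.2⟩

lemma toComplex_injective : Function.Injective toComplex := fun m n h => by
  simpa [toComplex, Complex.ext_iff, Prod.ext_iff] using h

lemma dist_toComplex (m n : ℤ × ℤ) :
    dist (toComplex m) (toComplex n) = √(((m - n).1 : ℝ) ^ 2 + ((m - n).2 : ℝ) ^ 2) := by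
  simp [toComplex, Complex.dist_eq_re_im]

theorem card_sumPairs_le_two_of_mem_circle {S : Finset (ℤ × ℤ)} {lam : ℝ}
    (hS : ∀ m ∈ S, (m.1 : ℝ) ^ 2 + (m.2 : ℝ) ^ 2 = lam) {s : ℤ × ℤ} (hs : s ≠ 0) :
    #(sumPairs S s) ≤ 2 := by
  have hmem : ∀ p ∈ sumPairs S s, dist (toComplex p.1) (toComplex 0) = √lam ∧
      dist (toComplex p.1) (toComplex s) = √lam ∧ p.2 = s - p.1 := fun p hp => by
    obtain ⟨hpS, hps⟩ := mem_filter.1 hp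
    have hp2 : p.2 = s - p.1 := eq_sub_of_add_eq' hps
    refine ⟨by rw [dist_toComplex, sub_zero, hS _ (mem_product.1 hpS).1], ?_, hp2⟩
    rw [dist_comm, dist_toComplex, ← hp2, hS _ (mem_product.1 hpS).2]
  have hfst : ∀ p ∈ sumPairs S s, ∀ q ∈ sumPairs S s, p ≠ q → toComplex p.1 ≠ toComplex q.1 :=
    fun p hp q hq hpq h => hpq <| by
      have h1 := toComplex_injective h
      exact Prod.ext h1 (by rw [(hmem p hp).2.2, (hmem q hq).2.2, h1])
  by_contra! h
  obtain ⟨p, hp, q, hq, r, hr, hpq, hpr, hqr⟩ := two_lt_card.1 h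
  -- `p.1`, `q.1`, `r.1` all lie on the two distinct circles of radius `√lam` about `0` and `s`
  rcases EuclideanGeometry.eq_of_dist_eq_of_dist_eq_of_finrank_eq_two Complex.finrank_real_complex
    (toComplex_injective.ne hs.symm) (hfst q hq r hr hqr) (hmem q hq).1 (hmem r hr).1
    (hmem p hp).1 (hmem q hq).2.1 (hmem r hr).2.1 (hmem p hp).2.1 with h | h
  · exact hfst p hp q hq hpq h
  · exact hfst p hp r hr hpr h

lemma integral_rpow_le_mul_integral_rpow {α : Type*} [MeasurableSpace α] {μ : Measure α}
    {f : α → ℝ} {C p q : ℝ} (hq : 0 ≤ q) (hqp : q ≤ p) (hf : ∀ x, 0 ≤ f x) (hfC : ∀ x, f x ≤ C)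
    (hint : Integrable (fun x => f x ^ q) μ) :
    ∫ x, f x ^ p ∂μ ≤ C ^ (p - q) * ∫ x, f x ^ q ∂μ := by
  rw [← integral_const_mul]
  refine integral_mono_of_nonneg (ae_of_all _ fun x => rpow_nonneg (hf x) _) (hint.const_mul _)
    (ae_of_all _ fun x => ?_)
  calc f x ^ p = f x ^ (p - q) * f x ^ q := by
        rw [← rpow_add_of_nonneg (hf x) (sub_nonneg.2 hqp) hq, sub_add_cancel]
    _ ≤ C ^ (p - q) * f x ^ q :=
        mul_le_mul_of_nonneg_right (rpow_le_rpow (hf x) (hfC x) (sub_nonneg.2 hqp))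
          (rpow_nonneg (hf x) _)

end LpCircle

open LpCircle

theorem lp_bound_circle_trigonometric_polynomial
    (lam : ℝ) (p : ℝ) (hp : 4 ≤ p) (S : Finset (ℤ × ℤ))
    (hS : ∀ m : ℤ × ℤ, m ∈ S ↔ ((m.1 : ℝ) ^ 2 + (m.2 : ℝ) ^ 2 = lam))
    (a : ℤ × ℤ → ℂ) :
    (∫ x in Set.Icc (0 : ℝ) 1 ×ˢ Set.Icc (0 : ℝ) 1,
        ‖∑ m ∈ S, a m *
          Complex.exp (2 * (Real.pi : ℂ) * Complex.I *
            ((m.1 : ℂ) * (x.1 : ℂ) + (m.2 : ℂ) * (x.2 : ℂ)))‖ ^ p) ≤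
      3 * (S.card : ℝ) ^ ((p - 4) / 2) * (∑ m ∈ S, ‖a m‖ ^ 2) ^ (p / 2) := by
  change ∫ x in unitSquare, ‖trigPoly S a x‖ ^ p ≤ _
  set A := ∑ m ∈ S, ‖a m‖ ^ 2
  have hA : 0 ≤ A := by positivity
  have hL4 : ∫ x in unitSquare, ‖trigPoly S a x‖ ^ (4 : ℝ) ≤ 3 * A ^ 2 := by
    simp only [rpow_ofNat]
    exact integral_norm_pow_four_trigPoly_le
      (fun s hs => card_sumPairs_le_two_of_mem_circle (fun m hm => (hS m).1 hm) hs) a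
  have hint : IntegrableOn (fun x => ‖trigPoly S a x‖ ^ (4 : ℝ)) unitSquare :=
    integrableOn_unitSquare <|
      (continuous_trigPoly S a).norm.rpow_const fun _ => Or.inr zero_le_four
  calc _ ≤ √(#S * A) ^ (p - 4) * ∫ x in unitSquare, ‖trigPoly S a x‖ ^ (4 : ℝ) :=
        integral_rpow_le_mul_integral_rpow (by norm_num) hp (fun _ => norm_nonneg _)
          (norm_trigPoly_le S a) hint
    _ ≤ √(#S * A) ^ (p - 4) * (3 * A ^ 2) := by gcongr
    _ = 3 * (#S : ℝ) ^ ((p - 4) / 2) * A ^ (p / 2) := by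
        rw [sqrt_eq_rpow, ← rpow_mul (by positivity), mul_rpow (by positivity) hA,
          show p / 2 = 1 / 2 * (p - 4) + 2 by ring, rpow_add_of_nonneg hA (by linarith) zero_le_two,
          rpow_two, show 1 / 2 * (p - 4) = (p - 4) / 2 by ring]
        ring
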